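/- Let λ₁ > 0, λ₂ ≥ 0 and μ₁, μ₂ > 0, and suppose both warm standby systems have the same unit failure rates λ₁₁ = λ₂₁ = λ₁ and λ₁₂ = λ₂₂ = λ₂. Then μ₁ ≥ μ₂ if and only if r^W_1(t) ≤ r^W_2(t) for all t > 0, i.e. τ^W_1 ≥_hr τ^W_2. -/

import Mathlib

/-- The real hyperbolic cotangent. -/
noncomputable def coth (x : ℝ) : ℝ := Real.cosh x / Real.sinh x

/-- `a_i = sqrt((λ₂ + μ_i)² + 4 λ₁ μ_i)` for the warm standby system. -/
noncomputable def aW (l1 l2 m : ℝ) : ℝ := Real.sqrt ((l2 + m) ^ 2 + 4 * l1 * m)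

/-- Hazard rate of the lifetime of the Markovian two-unit warm standby system. -/
noncomputable def rW (l1 l2 m t : ℝ) : ℝ :=
  2 * l1 * (l1 + l2) / (2 * l1 + l2 + m + aW l1 l2 m * coth (aW l1 l2 m * t / 2))

/-!
For fixed `t > 0` the hazard rate is strictly decreasing in the repair rate `m`: its denominator
is `m` plus `a * coth (a * t / 2)`, where `a = aW l1 l2 m` increases with `m` and `u ↦ u * coth u`
increases on `(0, ∞)` because its derivative is `(sinh u * cosh u - u) / sinh u ^ 2` and
`2 * sinh u * cosh u = sinh (2 * u) ≥ 2 * u`. Hence comparing the hazard rates at any one `t > 0`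
already decides the order of the repair rates.
-/

open Real Set

lemma self_le_sinh_mul_cosh {x : ℝ} (hx : 0 ≤ x) : x ≤ sinh x * cosh x := by
  have := self_le_sinh_iff.2 (by positivity : 0 ≤ 2 * x)
  rw [sinh_two_mul] at this
  linarith

lemma coth_pos {x : ℝ} (hx : 0 < x) : 0 < coth x :=
  div_pos (cosh_pos x) (sinh_pos_iff.2 hx)

lemma hasDerivAt_mul_coth {x : ℝ} (hx : x ≠ 0) :
    HasDerivAt (fun u => u * coth u) ((sinh x * cosh x - x) / sinh x ^ 2) x := by
  have hs : sinh x ≠ 0 := sinh_ne_zero.2 hx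
  refine ((hasDerivAt_id' x).mul ((hasDerivAt_cosh x).div (hasDerivAt_sinh x) hs)).congr_deriv ?_
  rw [Pi.div_apply]
  field_simp
  linear_combination -x * cosh_sq x

lemma monotoneOn_mul_coth : MonotoneOn (fun u => u * coth u) (Ioi 0) := by
  refine monotoneOn_of_hasDerivWithinAt_nonneg (convex_Ioi 0)
    (fun x hx => (hasDerivAt_mul_coth (ne_of_gt hx)).continuousAt.continuousWithinAt)
    (fun x hx => (hasDerivAt_mul_coth (ne_of_gt (interior_subset hx))).hasDerivWithinAt)
    (fun x hx => ?_)
  rw [interior_Ioi] at hx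
  exact div_nonneg (sub_nonneg.2 (self_le_sinh_mul_cosh hx.le)) (sq_nonneg _)

lemma monotoneOn_mul_coth_mul_div_two {t : ℝ} (ht : 0 < t) :
    MonotoneOn (fun a => a * coth (a * t / 2)) (Ioi 0) := by
  intro a ha b hb hab
  have key : a * t / 2 * coth (a * t / 2) ≤ b * t / 2 * coth (b * t / 2) :=
    monotoneOn_mul_coth (by simp only [mem_Ioi] at ha ⊢; positivity)
      (by simp only [mem_Ioi] at hb ⊢; positivity) (by gcongr)
  calc a * coth (a * t / 2) = 2 / t * (a * t / 2 * coth (a * t / 2)) := by field_simp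
    _ ≤ 2 / t * (b * t / 2 * coth (b * t / 2)) := by gcongr
    _ = b * coth (b * t / 2) := by field_simp

section WarmStandby

variable {l1 l2 : ℝ}

lemma aW_pos (h1 : 0 ≤ l1) (h2 : 0 ≤ l2) {m : ℝ} (hm : 0 < m) : 0 < aW l1 l2 m :=
  sqrt_pos.2 (by positivity)

lemma monotoneOn_aW (h1 : 0 ≤ l1) (h2 : 0 ≤ l2) : MonotoneOn (aW l1 l2) (Ici 0) := by
  intro m hm m' _ hmm'
  simp only [mem_Ici] at hm
  unfold aW
  gcongr

lemma rW_denom_pos (h1 : 0 ≤ l1) (h2 : 0 ≤ l2) {m t : ℝ} (hm : 0 < m) (ht : 0 < t) :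
    0 < 2 * l1 + l2 + m + aW l1 l2 m * coth (aW l1 l2 m * t / 2) := by
  have ha := aW_pos h1 h2 hm
  have := coth_pos (by positivity : 0 < aW l1 l2 m * t / 2)
  positivity

lemma strictMonoOn_rW_denom (h1 : 0 ≤ l1) (h2 : 0 ≤ l2) {t : ℝ} (ht : 0 < t) :
    StrictMonoOn (fun m => 2 * l1 + l2 + m + aW l1 l2 m * coth (aW l1 l2 m * t / 2)) (Ioi 0) := by
  intro m hm m' hm' hmm'
  have := monotoneOn_mul_coth_mul_div_two ht (aW_pos h1 h2 hm) (aW_pos h1 h2 hm')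
    (monotoneOn_aW h1 h2 (Ioi_subset_Ici_self hm) (Ioi_subset_Ici_self hm') hmm'.le)
  dsimp only
  linarith

lemma strictAntiOn_rW (h1 : 0 < l1) (h2 : 0 ≤ l2) {t : ℝ} (ht : 0 < t) :
    StrictAntiOn (fun m => rW l1 l2 m t) (Ioi 0) := fun m hm m' hm' hmm' =>
  div_lt_div_of_pos_left (by positivity) (rW_denom_pos h1.le h2 hm ht)
    (strictMonoOn_rW_denom h1.le h2 ht hm hm' hmm')

end WarmStandby

theorem warm_hr_iff_repair (l1 l2 m1 m2 : ℝ)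
    (h1 : 0 < l1) (h2 : 0 ≤ l2) (hm1 : 0 < m1) (hm2 : 0 < m2) :
    m1 ≥ m2 ↔ ∀ t > (0 : ℝ), rW l1 l2 m1 t ≤ rW l1 l2 m2 t := by
  have hr (t : ℝ) (ht : 0 < t) : rW l1 l2 m1 t ≤ rW l1 l2 m2 t ↔ m2 ≤ m1 :=
    (strictAntiOn_rW h1 h2 ht).le_iff_ge hm1 hm2
  exact ⟨fun h t ht => (hr t ht).2 h, fun h => (hr 1 one_pos).1 (h 1 one_pos)⟩
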